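/- If φ is an optimal solution of the embedding problem ν (centered, edge-length constrained, maximizing variance) and m₁ is an optimal solution of the eigenvalue maximization problem σ, and ν(G,m₀,d) = (D²/M)/σ(G,m₀,d), then each component of φ is an eigenfunction of Δ_{(m₀,m₁)} with eigenvalue λ₁(G,(m₀,m₁)) = σ(G,m₀,d). -/

import Mathlib

open Finset
open scoped Classical

/-- The weighted graph Laplacian `(Δf)(u) = (1/m₀(u))[(∑_{v∼u} m₁(uv)) f(u) − ∑_{v∼u} m₁(uv) f(v)]`. -/
noncomputable def lapl {V : Type*} [Fintype V] (G : SimpleGraph V) [DecidableRel G.Adj]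
    (m0 : V → ℝ) (m1 : Sym2 V → ℝ) (f : V → ℝ) : V → ℝ :=
  fun u => (1 / m0 u) * ((∑ v ∈ G.neighborFinset u, m1 s(u, v)) * f u
    - ∑ v ∈ G.neighborFinset u, m1 s(u, v) * f v)

/-- `lam` is an eigenvalue of the weighted Laplacian. -/
def IsEigenval {V : Type*} [Fintype V] (G : SimpleGraph V) [DecidableRel G.Adj]
    (m0 : V → ℝ) (m1 : Sym2 V → ℝ) (lam : ℝ) : Prop :=
  ∃ f : V → ℝ, f ≠ 0 ∧ lapl G m0 m1 f = fun u => lam * f u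

/-- `lam` is the smallest nonzero eigenvalue (the second smallest eigenvalue)
of the weighted Laplacian. -/
def IsLambdaOne {V : Type*} [Fintype V] (G : SimpleGraph V) [DecidableRel G.Adj]
    (m0 : V → ℝ) (m1 : Sym2 V → ℝ) (lam : ℝ) : Prop :=
  lam ≠ 0 ∧ IsEigenval G m0 m1 lam ∧
    ∀ mu : ℝ, mu ≠ 0 → IsEigenval G m0 m1 mu → lam ≤ mu

/-- The weighted barycenter `bar(φ) = (1/M) ∑_u m₀(u) φ(u)`. -/
noncomputable def bar {V : Type*} {n : ℕ} [Fintype V] (m0 : V → ℝ)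
    (φ : V → EuclideanSpace ℝ (Fin n)) : EuclideanSpace ℝ (Fin n) :=
  (1 / ∑ u, m0 u) • ∑ u, m0 u • φ u

/-- The weighted Dirichlet energy `∑_{uv∈E} m₁(uv) ‖φ(u) − φ(v)‖²`. -/
noncomputable def edgeNormSq {V : Type*} {n : ℕ} [Fintype V] (G : SimpleGraph V)
    [DecidableRel G.Adj] (m1 : Sym2 V → ℝ) (φ : V → EuclideanSpace ℝ (Fin n)) : ℝ :=
  ∑ e ∈ G.edgeFinset, m1 e *
    Sym2.lift ⟨fun u v => ‖φ u - φ v‖ ^ 2, fun u v => by simp only [norm_sub_rev (φ u) (φ v)]⟩ e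

/-- The weighted Dirichlet energy `∑_{uv∈E} m₁(uv) (φ(u) − φ(v))²` of a scalar function. -/
noncomputable def edgeSqS {V : Type*} [Fintype V] (G : SimpleGraph V)
    [DecidableRel G.Adj] (m1 : Sym2 V → ℝ) (φ : V → ℝ) : ℝ :=
  ∑ e ∈ G.edgeFinset, m1 e *
    Sym2.lift ⟨fun u v => (φ u - φ v) ^ 2, fun u v => by simp only []; ring⟩ e

/-- The subgraph of positively weighted edges. -/
def posSub {V : Type*} (G : SimpleGraph V) (m1 : Sym2 V → ℝ) : SimpleGraph V :=
  SimpleGraph.fromRel (fun u v => G.Adj u v ∧ 0 < m1 s(u, v))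

/-- Objective values of the barycenter-minimization problem:
`‖bar(φ)‖²` over `φ : V → ℝ^{|V|}` with `∑_u m₀(u)‖φ(u)‖² = M` and
`‖φ(u) − φ(v)‖ ≤ d(uv)` for all edges `uv`.  `δ(G,m₀,d)` is its infimum. -/
noncomputable def deltaSet {V : Type*} [Fintype V] (G : SimpleGraph V) [DecidableRel G.Adj]
    (m0 : V → ℝ) (d : Sym2 V → ℝ) : Set ℝ :=
  {r | ∃ φ : V → EuclideanSpace ℝ (Fin (Fintype.card V)),
    (∑ u, m0 u * ‖φ u‖ ^ 2) = (∑ u, m0 u) ∧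
    (∀ u v, G.Adj u v → ‖φ u - φ v‖ ≤ d s(u, v)) ∧
    r = ‖bar m0 φ‖ ^ 2}

/-- Objective values of the centered variance-maximization problem:
`(1/M) ∑_u m₀(u)‖φ(u)‖²` over `φ : V → ℝ^{|V|}` with `∑_u m₀(u)φ(u) = 0` and
`‖φ(u) − φ(v)‖ ≤ d(uv)` for all edges `uv`.  `ν(G,m₀,d)` is its supremum. -/
noncomputable def nuSet {V : Type*} [Fintype V] (G : SimpleGraph V) [DecidableRel G.Adj]
    (m0 : V → ℝ) (d : Sym2 V → ℝ) : Set ℝ :=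
  {r | ∃ φ : V → EuclideanSpace ℝ (Fin (Fintype.card V)),
    (∑ u, m0 u • φ u) = 0 ∧
    (∀ u v, G.Adj u v → ‖φ u - φ v‖ ≤ d s(u, v)) ∧
    r = (1 / ∑ u, m0 u) * ∑ u, m0 u * ‖φ u‖ ^ 2}

/-- Values `λ₁(G,(m₀,m₁))` over edge weights `m₁ ≥ 0` with
`∑_{uv∈E} m₁(uv) d(uv)² = D²`.  `σ(G,m₀,d)` is its supremum. -/
noncomputable def sigmaSet {V : Type*} [Fintype V] (G : SimpleGraph V) [DecidableRel G.Adj]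
    (m0 : V → ℝ) (d : Sym2 V → ℝ) : Set ℝ :=
  {lam | ∃ m1 : Sym2 V → ℝ, (∀ e, 0 ≤ m1 e) ∧
    (∑ e ∈ G.edgeFinset, m1 e * d e ^ 2) = (∑ e ∈ G.edgeFinset, d e ^ 2) ∧
    IsLambdaOne G m0 m1 lam}

/-!
Conjugating `Δ` by `√m₀` gives an operator that is symmetric for the Euclidean inner product on
`ℝ^V` and has the same eigenvalues. Its quadratic form at `√m₀ f` is the Dirichlet energy
`E(f) = ∑ m₁(uv) (f u − f v)²`, and its kernel is spanned by `√m₀` when the edges of positive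
weight connect `G`. Expanding in an orthonormal eigenbasis, every `m₀`-centred `f` therefore
satisfies `λ₁ ∑ m₀ f² ≤ E(f)`, with equality only for `λ₁`-eigenfunctions. Summing over the
coordinates of `φ`, `λ₁ ∑ m₀ ‖φ‖² ≤ ∑ m₁ ‖φ u − φ v‖² ≤ ∑ m₁ d² = D²`, and `ν = (D²/M)/σ` says
that the two ends agree, so equality holds in every coordinate.
-/

namespace SimpleGraph

variable {V : Type*} [Fintype V] (G : SimpleGraph V) [DecidableRel G.Adj]
  {β : Type*} [AddCommMonoid β]

theorem sum_dart_eq_sum_neighborFinset (F : V → V → β) :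
    ∑ d : G.Dart, F d.fst d.snd = ∑ u, ∑ v ∈ G.neighborFinset u, F u v := by
  rw [Finset.sum_sigma']
  exact Finset.sum_bij' (fun d _ => ⟨d.fst, d.snd⟩)
    (fun p hp => ⟨(p.1, p.2), by simpa using hp⟩) (by simp) (by simp) (by simp) (by simp) (by simp)

theorem sum_neighborFinset_comm (F : V → V → β) :
    ∑ u, ∑ v ∈ G.neighborFinset u, F u v = ∑ u, ∑ v ∈ G.neighborFinset u, F v u := by
  rw [← sum_dart_eq_sum_neighborFinset, ← sum_dart_eq_sum_neighborFinset]
  exact Fintype.sum_bijective _ Dart.symm_involutive.bijective _ _ fun _ => rfl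

theorem sum_dart_edge (g : Sym2 V → β) :
    ∑ d : G.Dart, g d.edge = 2 • ∑ e ∈ G.edgeFinset, g e := by
  classical
  rw [← Finset.sum_fiberwise_of_maps_to (g := Dart.edge) (t := G.edgeFinset)
    fun d _ => G.mem_edgeFinset.2 d.edge_mem, Finset.smul_sum]
  refine Finset.sum_congr rfl fun e he => ?_
  rw [Finset.sum_congr rfl fun d hd => congrArg g (Finset.mem_filter.1 hd).2, Finset.sum_const,
    G.dart_edge_fiber_card e (G.mem_edgeFinset.1 he)]

theorem sum_neighborFinset_sym2 (g : Sym2 V → β) :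
    ∑ u, ∑ v ∈ G.neighborFinset u, g s(u, v) = 2 • ∑ e ∈ G.edgeFinset, g e := by
  rw [← sum_dart_eq_sum_neighborFinset, ← sum_dart_edge]
  rfl

end SimpleGraph

namespace LinearMap.IsSymmetric

open scoped RealInnerProductSpace
open Module.End

variable {E : Type*} [NormedAddCommGroup E] [InnerProductSpace ℝ E] [FiniteDimensional ℝ E]
  {T : E →ₗ[ℝ] E} (hT : T.IsSymmetric) {n : ℕ} (hn : Module.finrank ℝ E = n)

theorem inner_apply_eigenvectorBasis (x : E) (i : Fin n) :
    ⟪T x, hT.eigenvectorBasis hn i⟫ = hT.eigenvalues hn i * ⟪x, hT.eigenvectorBasis hn i⟫ := by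
  rw [hT x, hT.apply_eigenvectorBasis, real_inner_smul_right]
  rfl

theorem inner_sub_smul_eq_sum (lam : ℝ) (x : E) :
    ⟪T x - lam • x, x⟫ =
      ∑ i, (hT.eigenvalues hn i - lam) * ⟪x, hT.eigenvectorBasis hn i⟫ ^ 2 := by
  rw [← (hT.eigenvectorBasis hn).sum_inner_mul_inner]
  refine Finset.sum_congr rfl fun i _ => ?_
  rw [inner_sub_left, real_inner_smul_left, hT.inner_apply_eigenvectorBasis hn,
    real_inner_comm x]
  ring

variable {lam : ℝ} (hlam : ∀ μ, μ ≠ 0 → HasEigenvalue T μ → lam ≤ μ)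
  {x : E} (hx : x ∈ (LinearMap.ker T)ᗮ)
include hT hlam hx

theorem sub_mul_inner_eigenvectorBasis_sq_nonneg (i : Fin n) :
    0 ≤ (hT.eigenvalues hn i - lam) * ⟪x, hT.eigenvectorBasis hn i⟫ ^ 2 := by
  by_cases hμ : hT.eigenvalues hn i = 0
  · have hker : hT.eigenvectorBasis hn i ∈ LinearMap.ker T := by
      rw [LinearMap.mem_ker, hT.apply_eigenvectorBasis, hμ]
      simp
    rw [real_inner_comm, (Submodule.mem_orthogonal _ _).1 hx _ hker]
    simp
  · exact mul_nonneg (sub_nonneg.2 (hlam _ hμ (hT.hasEigenvalue_eigenvalues hn i)))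
      (sq_nonneg _)

theorem mul_norm_sq_le_inner_apply : lam * ‖x‖ ^ 2 ≤ ⟪T x, x⟫ := by
  have h := hT.inner_sub_smul_eq_sum rfl lam x
  rw [inner_sub_left, real_inner_smul_left, real_inner_self_eq_norm_sq] at h
  linarith [Finset.sum_nonneg (s := Finset.univ) fun i _ =>
    hT.sub_mul_inner_eigenvectorBasis_sq_nonneg rfl hlam hx i]

theorem apply_eq_smul_of_inner_apply_eq (heq : ⟪T x, x⟫ = lam * ‖x‖ ^ 2) : T x = lam • x := by
  set b := hT.eigenvectorBasis rfl
  have hsum : ∑ i, (hT.eigenvalues rfl i - lam) * ⟪x, b i⟫ ^ 2 = 0 := by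
    rw [← hT.inner_sub_smul_eq_sum, inner_sub_left, real_inner_smul_left,
      real_inner_self_eq_norm_sq, heq, sub_self]
  have hterm := (Finset.sum_eq_zero_iff_of_nonneg fun i _ =>
    hT.sub_mul_inner_eigenvectorBasis_sq_nonneg rfl hlam hx i).1 hsum
  rw [← sub_eq_zero, ← b.sum_repr' (T x - lam • x)]
  refine Finset.sum_eq_zero fun i hi => ?_
  have hcoord : ⟪b i, T x - lam • x⟫ = (hT.eigenvalues rfl i - lam) * ⟪x, b i⟫ := by
    rw [inner_sub_right, real_inner_smul_right, real_inner_comm,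
      hT.inner_apply_eigenvectorBasis, real_inner_comm]
    ring
  rcases mul_eq_zero.1 (hterm i hi) with h | h
  · rw [hcoord, h, zero_mul, zero_smul]
  · rw [hcoord, pow_eq_zero_iff two_ne_zero |>.1 h, mul_zero, zero_smul]

end LinearMap.IsSymmetric

section WeightedLaplacian

variable {V : Type*} [Fintype V] (G : SimpleGraph V) [DecidableRel G.Adj]
  {m0 : V → ℝ} (m1 : Sym2 V → ℝ)

theorem sum_mul_lapl_mul (hm0 : ∀ u, m0 u ≠ 0) (f h : V → ℝ) :
    ∑ u, m0 u * lapl G m0 m1 f u * h u =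
      (∑ u, ∑ v ∈ G.neighborFinset u, m1 s(u, v) * ((f u - f v) * (h u - h v))) / 2 := by
  have hrow : ∀ u, m0 u * lapl G m0 m1 f u * h u =
      ∑ v ∈ G.neighborFinset u, m1 s(u, v) * ((f u - f v) * h u) := fun u => by
    rw [lapl, Finset.sum_mul, ← Finset.sum_sub_distrib]
    field_simp [hm0 u]
    rw [Finset.sum_mul]
    exact Finset.sum_congr rfl fun v _ => by ring
  rw [Finset.sum_congr rfl fun u _ => hrow u, eq_div_iff two_ne_zero, mul_two]
  nth_rewrite 2 [G.sum_neighborFinset_comm]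
  rw [← Finset.sum_add_distrib]
  refine Finset.sum_congr rfl fun u _ => ?_
  rw [← Finset.sum_add_distrib]
  exact Finset.sum_congr rfl fun v _ => by rw [Sym2.eq_swap]; ring

theorem sum_mul_lapl_mul_comm (hm0 : ∀ u, m0 u ≠ 0) (f h : V → ℝ) :
    ∑ u, m0 u * lapl G m0 m1 f u * h u = ∑ u, m0 u * lapl G m0 m1 h u * f u := by
  simp only [sum_mul_lapl_mul G m1 hm0, mul_comm (f _ - f _)]

theorem sum_mul_lapl_mul_self (hm0 : ∀ u, m0 u ≠ 0) (f : V → ℝ) :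
    ∑ u, m0 u * lapl G m0 m1 f u * f u = edgeSqS G m1 f := by
  rw [sum_mul_lapl_mul G m1 hm0, edgeSqS, div_eq_iff two_ne_zero, mul_comm, two_mul,
    ← two_nsmul, ← G.sum_neighborFinset_sym2]
  simp only [Sym2.lift_mk, sq]

theorem eq_of_edgeSqS_eq_zero (hm1 : ∀ e, 0 ≤ m1 e) (hconn : (posSub G m1).Preconnected)
    {f : V → ℝ} (hf : edgeSqS G m1 f = 0) (u v : V) : f u = f v := by
  have hterm := (Finset.sum_eq_zero_iff_of_nonneg fun e _ => mul_nonneg (hm1 e)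
    (Sym2.inductionOn e fun u v => sq_nonneg (f u - f v))).1 hf
  have hadj : ∀ u v, (posSub G m1).Adj u v → f u = f v := by
    intro u v huv
    obtain ⟨hGuv, hpos⟩ : G.Adj u v ∧ 0 < m1 s(u, v) := by
      rcases (SimpleGraph.fromRel_adj _ u v).1 huv |>.2 with h | h
      · exact h
      · exact ⟨h.1.symm, Sym2.eq_swap (a := v) ▸ h.2⟩
    have h := (mul_eq_zero.1 (hterm s(u, v) (G.mem_edgeFinset.2 hGuv))).resolve_left hpos.ne'
    exact sub_eq_zero.1 (pow_eq_zero_iff two_ne_zero |>.1 h)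
  obtain ⟨p⟩ := hconn u v
  induction p with
  | nil => rfl
  | cons h _ ih => exact (hadj _ _ h).trans ih

end WeightedLaplacian

section SymmetrizedLaplacian

open scoped RealInnerProductSpace
open Module.End

variable {V : Type*} (m0 : V → ℝ)

noncomputable def sqrtMul : (V → ℝ) →ₗ[ℝ] EuclideanSpace ℝ V where
  toFun f := WithLp.toLp 2 fun u => √(m0 u) * f u
  map_add' f g := by ext u; simp [mul_add]
  map_smul' c f := by ext u; simp [mul_left_comm]

variable {m0}

theorem sqrtMul_apply (f : V → ℝ) (u : V) : sqrtMul m0 f u = √(m0 u) * f u := rfl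

theorem sqrtMul_surjective (hm0 : ∀ u, 0 < m0 u) : Function.Surjective (sqrtMul m0) :=
  fun g => ⟨fun v => g v / √(m0 v), by
    ext u
    rw [sqrtMul_apply, mul_div_cancel₀ _ (Real.sqrt_pos.2 (hm0 u)).ne']⟩

theorem sqrtMul_injective (hm0 : ∀ u, 0 < m0 u) : Function.Injective (sqrtMul m0) := by
  intro f g h
  funext u
  have hu := congrArg (· u) h
  simp only [sqrtMul_apply] at hu
  exact mul_left_cancel₀ (Real.sqrt_pos.2 (hm0 u)).ne' hu

variable [Fintype V]

theorem inner_sqrtMul (hm0 : ∀ u, 0 ≤ m0 u) (f h : V → ℝ) :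
    ⟪sqrtMul m0 f, sqrtMul m0 h⟫ = ∑ u, m0 u * f u * h u := by
  simp only [PiLp.inner_apply, sqrtMul_apply, RCLike.inner_apply, conj_trivial]
  refine Finset.sum_congr rfl fun u _ => ?_
  linear_combination (f u * h u) * Real.mul_self_sqrt (hm0 u)

theorem norm_sqrtMul_sq (hm0 : ∀ u, 0 ≤ m0 u) (f : V → ℝ) :
    ‖sqrtMul m0 f‖ ^ 2 = ∑ u, m0 u * f u ^ 2 := by
  rw [← real_inner_self_eq_norm_sq, inner_sqrtMul hm0]
  simp only [mul_assoc, sq]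

noncomputable def symLapl (G : SimpleGraph V) [DecidableRel G.Adj] (m0 : V → ℝ)
    (m1 : Sym2 V → ℝ) : EuclideanSpace ℝ V →ₗ[ℝ] EuclideanSpace ℝ V where
  toFun g := sqrtMul m0 (lapl G m0 m1 fun v => g v / √(m0 v))
  map_add' g h := by
    rw [← map_add]
    congr 1
    ext u
    simp only [lapl, PiLp.add_apply, add_div, Pi.add_apply, mul_add, Finset.sum_add_distrib]
    ring
  map_smul' c g := by
    rw [RingHom.id_apply, ← map_smul]
    congr 1
    ext u
    simp only [lapl, PiLp.smul_apply, smul_eq_mul, Pi.smul_apply, mul_div_assoc,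
      mul_left_comm _ c, ← Finset.mul_sum]
    ring

variable (G : SimpleGraph V) [DecidableRel G.Adj] (m1 : Sym2 V → ℝ)

theorem symLapl_sqrtMul (hm0 : ∀ u, 0 < m0 u) (f : V → ℝ) :
    symLapl G m0 m1 (sqrtMul m0 f) = sqrtMul m0 (lapl G m0 m1 f) := by
  change sqrtMul m0 (lapl G m0 m1 fun v => sqrtMul m0 f v / √(m0 v)) = _
  simp only [sqrtMul_apply, mul_div_cancel_left₀ _ (Real.sqrt_pos.2 (hm0 _)).ne']

theorem inner_symLapl_sqrtMul (hm0 : ∀ u, 0 < m0 u) (f h : V → ℝ) :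
    ⟪symLapl G m0 m1 (sqrtMul m0 f), sqrtMul m0 h⟫ = ∑ u, m0 u * lapl G m0 m1 f u * h u := by
  rw [symLapl_sqrtMul G m1 hm0, inner_sqrtMul fun u => (hm0 u).le]

theorem inner_symLapl_sqrtMul_self (hm0 : ∀ u, 0 < m0 u) (f : V → ℝ) :
    ⟪symLapl G m0 m1 (sqrtMul m0 f), sqrtMul m0 f⟫ = edgeSqS G m1 f := by
  rw [inner_symLapl_sqrtMul G m1 hm0, sum_mul_lapl_mul_self G m1 fun u => (hm0 u).ne']

theorem symLapl_isSymmetric (hm0 : ∀ u, 0 < m0 u) : (symLapl G m0 m1).IsSymmetric := by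
  intro g h
  obtain ⟨f, rfl⟩ := sqrtMul_surjective hm0 g
  obtain ⟨h, rfl⟩ := sqrtMul_surjective hm0 h
  rw [real_inner_comm (symLapl G m0 m1 _),
    inner_symLapl_sqrtMul G m1 hm0, inner_symLapl_sqrtMul G m1 hm0,
    sum_mul_lapl_mul_comm G m1 fun u => (hm0 u).ne']

theorem isEigenval_of_hasEigenvalue_symLapl (hm0 : ∀ u, 0 < m0 u) {μ : ℝ}
    (hμ : HasEigenvalue (symLapl G m0 m1) μ) : IsEigenval G m0 m1 μ := by
  obtain ⟨g, hg, hg0⟩ := hμ.exists_hasEigenvector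
  obtain ⟨f, rfl⟩ := sqrtMul_surjective hm0 g
  rw [mem_eigenspace_iff, symLapl_sqrtMul G m1 hm0, ← map_smul] at hg
  exact ⟨f, fun h => hg0 (by rw [h, map_zero]), sqrtMul_injective hm0 hg⟩

theorem sqrtMul_mem_orthogonal_ker_symLapl (hm0 : ∀ u, 0 < m0 u) (hm1 : ∀ e, 0 ≤ m1 e)
    (hconn : (posSub G m1).Connected) {f : V → ℝ} (hf : ∑ u, m0 u * f u = 0) :
    sqrtMul m0 f ∈ (LinearMap.ker (symLapl G m0 m1))ᗮ := by
  refine (Submodule.mem_orthogonal _ _).2 fun g hg => ?_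
  obtain ⟨q, rfl⟩ := sqrtMul_surjective hm0 g
  rw [LinearMap.mem_ker, symLapl_sqrtMul G m1 hm0, ← map_zero (sqrtMul m0)] at hg
  have hq : edgeSqS G m1 q = 0 := by
    rw [← sum_mul_lapl_mul_self G m1 fun u => (hm0 u).ne', sqrtMul_injective hm0 hg]
    simp
  obtain ⟨u0⟩ := hconn.nonempty
  calc ⟪sqrtMul m0 q, sqrtMul m0 f⟫ = q u0 * ∑ u, m0 u * f u := by
        rw [inner_sqrtMul fun u => (hm0 u).le, Finset.mul_sum]
        refine Finset.sum_congr rfl fun u _ => ?_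
        rw [eq_of_edgeSqS_eq_zero G m1 hm1 hconn.preconnected hq u u0]
        ring
    _ = 0 := by rw [hf, mul_zero]

variable {lam : ℝ}

theorem mul_sum_sq_le_edgeSqS (hm0 : ∀ u, 0 < m0 u) (hm1 : ∀ e, 0 ≤ m1 e)
    (hconn : (posSub G m1).Connected) (hlam : ∀ μ, μ ≠ 0 → IsEigenval G m0 m1 μ → lam ≤ μ)
    {f : V → ℝ} (hf : ∑ u, m0 u * f u = 0) :
    lam * ∑ u, m0 u * f u ^ 2 ≤ edgeSqS G m1 f := by
  have h := (symLapl_isSymmetric G m1 hm0).mul_norm_sq_le_inner_apply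
    (fun μ hμ h => hlam μ hμ (isEigenval_of_hasEigenvalue_symLapl G m1 hm0 h))
    (sqrtMul_mem_orthogonal_ker_symLapl G m1 hm0 hm1 hconn hf)
  rwa [norm_sqrtMul_sq fun u => (hm0 u).le, inner_symLapl_sqrtMul_self G m1 hm0] at h

theorem lapl_eq_of_edgeSqS_eq (hm0 : ∀ u, 0 < m0 u) (hm1 : ∀ e, 0 ≤ m1 e)
    (hconn : (posSub G m1).Connected) (hlam : ∀ μ, μ ≠ 0 → IsEigenval G m0 m1 μ → lam ≤ μ)
    {f : V → ℝ} (hf : ∑ u, m0 u * f u = 0)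
    (heq : edgeSqS G m1 f = lam * ∑ u, m0 u * f u ^ 2) :
    lapl G m0 m1 f = fun u => lam * f u := by
  have h := (symLapl_isSymmetric G m1 hm0).apply_eq_smul_of_inner_apply_eq
    (fun μ hμ h => hlam μ hμ (isEigenval_of_hasEigenvalue_symLapl G m1 hm0 h))
    (sqrtMul_mem_orthogonal_ker_symLapl G m1 hm0 hm1 hconn hf)
    (by rw [norm_sqrtMul_sq fun u => (hm0 u).le, inner_symLapl_sqrtMul_self G m1 hm0, heq])
  rw [symLapl_sqrtMul G m1 hm0, ← map_smul] at h
  exact sqrtMul_injective hm0 h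

end SymmetrizedLaplacian

section Embedding

variable {V : Type*} [Fintype V] (G : SimpleGraph V) [DecidableRel G.Adj] (m1 : Sym2 V → ℝ)
  {n : ℕ}

theorem sum_edgeSqS_coord_eq_edgeNormSq (φ : V → EuclideanSpace ℝ (Fin n)) :
    ∑ i, edgeSqS G m1 (fun u => φ u i) = edgeNormSq G m1 φ := by
  unfold edgeNormSq edgeSqS
  rw [Finset.sum_comm]
  refine Finset.sum_congr rfl fun e _ => ?_
  rw [← Finset.mul_sum]
  induction e using Sym2.inductionOn with
  | hf u v => simp [EuclideanSpace.norm_sq_eq]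

theorem edgeNormSq_le_sum_mul_sq (hm1 : ∀ e, 0 ≤ m1 e) {d : Sym2 V → ℝ}
    {φ : V → EuclideanSpace ℝ (Fin n)}
    (hshort : ∀ u v, G.Adj u v → ‖φ u - φ v‖ ≤ d s(u, v)) :
    edgeNormSq G m1 φ ≤ ∑ e ∈ G.edgeFinset, m1 e * d e ^ 2 := by
  refine Finset.sum_le_sum fun e he => mul_le_mul_of_nonneg_left ?_ (hm1 e)
  induction e using Sym2.inductionOn with
  | hf u v => exact pow_le_pow_left₀ (norm_nonneg _) (hshort u v (G.mem_edgeFinset.1 he)) 2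

end Embedding

theorem optimal_embedding_is_eigenmap_general {V : Type*} [Fintype V]
    (G : SimpleGraph V) [DecidableRel G.Adj]
    (m0 : V → ℝ) (hm0 : ∀ u, 0 < m0 u)
    (d : Sym2 V → ℝ)
    (φ : V → EuclideanSpace ℝ (Fin (Fintype.card V)))
    (hcenter : (∑ u, m0 u • φ u) = 0)
    (hshort : ∀ u v, G.Adj u v → ‖φ u - φ v‖ ≤ d s(u, v))
    (hphiopt : (1 / ∑ u, m0 u) * ∑ u, m0 u * ‖φ u‖ ^ 2 = sSup (nuSet G m0 d))
    (m1 : Sym2 V → ℝ) (hm1 : ∀ e, 0 ≤ m1 e) (hconn : (posSub G m1).Connected)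
    (hnorm : ∑ e ∈ G.edgeFinset, m1 e * d e ^ 2 = ∑ e ∈ G.edgeFinset, d e ^ 2)
    (hm1opt : IsLambdaOne G m0 m1 (sSup (sigmaSet G m0 d)))
    (heq : sSup (nuSet G m0 d) =
      ((∑ e ∈ G.edgeFinset, d e ^ 2) / (∑ u, m0 u)) / sSup (sigmaSet G m0 d)) :
    ∀ i, lapl G m0 m1 (fun u => φ u i) =
      fun u => sSup (sigmaSet G m0 d) * φ u i := by
  set lam := sSup (sigmaSet G m0 d)
  have hM : ∑ u, m0 u ≠ 0 :=
    (Finset.sum_pos (fun u _ => hm0 u) ⟨hconn.nonempty.some, Finset.mem_univ _⟩).ne'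
  have hbalance : ∑ e ∈ G.edgeFinset, d e ^ 2 = lam * ∑ u, m0 u * ‖φ u‖ ^ 2 := by
    rw [heq] at hphiopt
    field_simp [hm1opt.1] at hphiopt
    linarith
  have hcenter' : ∀ i, ∑ u, m0 u * φ u i = 0 := fun i => by
    simpa using congrArg (· i) hcenter
  have hle := fun i => mul_sum_sq_le_edgeSqS G m1 hm0 hm1 hconn hm1opt.2.2 (hcenter' i)
  have hge : ∑ i, edgeSqS G m1 (fun u => φ u i) ≤ ∑ i, lam * ∑ u, m0 u * φ u i ^ 2 :=
    calc ∑ i, edgeSqS G m1 (fun u => φ u i)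
        = edgeNormSq G m1 φ := sum_edgeSqS_coord_eq_edgeNormSq G m1 φ
      _ ≤ ∑ e ∈ G.edgeFinset, d e ^ 2 := hnorm ▸ edgeNormSq_le_sum_mul_sq G m1 hm1 hshort
      _ = ∑ i, lam * ∑ u, m0 u * φ u i ^ 2 := by
        rw [hbalance, ← Finset.mul_sum, Finset.sum_comm]
        simp [EuclideanSpace.norm_sq_eq, Finset.mul_sum]
  have hequal := (Finset.sum_eq_sum_iff_of_le fun i _ => hle i).1
    ((Finset.sum_le_sum fun i _ => hle i).antisymm hge)
  exact fun i => lapl_eq_of_edgeSqS_eq G m1 hm0 hm1 hconn hm1opt.2.2 (hcenter' i)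
    (hequal i (Finset.mem_univ i)).symm

/-- if `φ` is optimal for `ν`, `m₁` is optimal for `σ`, and
`ν = (D²/M)/σ`, then each component of `φ` is a `λ₁`-eigenfunction. -/
theorem optimal_embedding_is_eigenmap {V : Type*} [Fintype V] [Nonempty V]
    (G : SimpleGraph V) [DecidableRel G.Adj] (hG : G.Connected)
    (m0 : V → ℝ) (hm0 : ∀ u, 0 < m0 u)
    (d : Sym2 V → ℝ) (hd : ∀ e ∈ G.edgeSet, 0 < d e)
    (φ : V → EuclideanSpace ℝ (Fin (Fintype.card V)))
    (hcenter : (∑ u, m0 u • φ u) = 0)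
    (hshort : ∀ u v, G.Adj u v → ‖φ u - φ v‖ ≤ d s(u, v))
    (hphiopt : (1 / ∑ u, m0 u) * ∑ u, m0 u * ‖φ u‖ ^ 2 = sSup (nuSet G m0 d))
    (m1 : Sym2 V → ℝ) (hm1 : ∀ e, 0 ≤ m1 e) (hconn : (posSub G m1).Connected)
    (hnorm : ∑ e ∈ G.edgeFinset, m1 e * d e ^ 2 = ∑ e ∈ G.edgeFinset, d e ^ 2)
    (hm1opt : IsLambdaOne G m0 m1 (sSup (sigmaSet G m0 d)))
    (heq : sSup (nuSet G m0 d) =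
      ((∑ e ∈ G.edgeFinset, d e ^ 2) / (∑ u, m0 u)) / sSup (sigmaSet G m0 d)) :
    ∀ i, lapl G m0 m1 (fun u => φ u i) =
      fun u => sSup (sigmaSet G m0 d) * φ u i :=
  optimal_embedding_is_eigenmap_general G m0 hm0 d φ hcenter hshort hphiopt m1 hm1 hconn hnorm
    hm1opt heq
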